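/- arXiv:2308.14285 — 2 statements merged into one kernel-verified Lean document; each statement's English description precedes it below -/
import Mathlib

section
/- Let R be a commutative Noetherian ring and N = M₀ ⊂ ⋯ ⊂ M_{i-1} ⊂^{p_i} M_i ⊂^{p_{i+1}} M_{i+1} ⊂ ⋯ ⊂ Mₙ = M a regular prime extension filtration of a finitely generated module M over a proper submodule N. If p_{i+1} ⊄ p_i, then there exists a submodule K_i of M such that N = M₀ ⊂ ⋯ ⊂ M_{i-1} ⊂^{p_{i+1}} K_i ⊂^{p_i} M_{i+1} ⊂ ⋯ ⊂ Mₙ = M is again a regular prime extension filtration of M over N. -/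
variable {R : Type*} [CommRing R] {M : Type*} [AddCommGroup M] [Module R M]

/-- The colon submodule `(N :_M I) = {x ∈ M | I • x ⊆ N}`. -/
def colonSubmodule (N : Submodule R M) (I : Ideal R) : Submodule R M where
  carrier := {x | ∀ a ∈ I, a • x ∈ N}
  add_mem' := fun hx hy a ha => by simpa [smul_add] using N.add_mem (hx a ha) (hy a ha)
  zero_mem' := fun a _ => by simp
  smul_mem' := fun c x hx a ha => by
    rw [smul_comm]
    exact N.smul_mem c (hx a ha)

/-- `K` is a `p`-prime extension of `N`, i.e. `N` is a `p`-prime submodule of `K`. -/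
def IsPrimeExt (p : Ideal R) (N K : Submodule R M) : Prop :=
  N < K ∧ N.colon K = p ∧ ∀ a : R, ∀ x ∈ K, a • x ∈ N → x ∈ N ∨ a ∈ p

/-- The associated primes of `T / N` for submodules `N ≤ T ≤ M`. -/
def assOf (R : Type*) {M : Type*} [CommRing R] [AddCommGroup M] [Module R M]
    (N T : Submodule R M) : Set (Ideal R) :=
  associatedPrimes R ↥(T.map N.mkQ)

/-- `K` is a maximal `p`-prime extension of `N` inside `T`. -/
def IsMaximalPrimeExtIn (T : Submodule R M) (p : Ideal R) (N K : Submodule R M) : Prop :=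
  K ≤ T ∧ IsPrimeExt p N K ∧ ∀ L ≤ T, IsPrimeExt p N L → ¬ K < L

/-- `K` is a regular `p`-prime extension of `N` inside `T`: a maximal `p`-prime
extension where `p` is a maximal element of `Ass (T/N)`. -/
def IsRegularPrimeExtIn (T : Submodule R M) (p : Ideal R) (N K : Submodule R M) : Prop :=
  IsMaximalPrimeExtIn T p N K ∧ Maximal (· ∈ assOf R N T) p

/-- A regular prime extension (RPE) filtration inside `T` with primes `p i`. -/
def IsRPEFiltrationIn (T : Submodule R M) {n : ℕ}
    (F : Fin (n + 1) → Submodule R M) (p : Fin n → Ideal R) : Prop :=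
  ∀ i : Fin n, IsRegularPrimeExtIn T (p i) (F i.castSucc) (F i.succ)

/-- The generalized prime ideal factorization of `N` in `T` is given by the multiset `s`:
there is an RPE filtration of `T` over `N` whose multiset of primes is `s`. -/
def HasGPIF (N T : Submodule R M) (s : Multiset (Ideal R)) : Prop :=
  ∃ (n : ℕ) (F : Fin (n + 1) → Submodule R M) (p : Fin n → Ideal R),
    F 0 = N ∧ F (Fin.last n) = T ∧ IsRPEFiltrationIn T F p ∧ (List.ofFn p : Multiset (Ideal R)) = s

/-!
If `p` is maximal in `Ass (M/N)`, every `x ∈ (N :_M p) \ N` has annihilator exactly `p` modulo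
`N`, so `(N :_M p)` is the unique maximal `p`-prime extension of `N`, and it is regular.
Now let `q ⊄ p` be maximal in `Ass (M/(N :_M p))`, the annihilator of `x` modulo `(N :_M p)`.
Then `p ⊄ q`, and for `c ∈ p \ q` the element `c • x` has annihilator `q` modulo `N`; this makes
`q` maximal in `Ass (M/N)` and `p` maximal in `Ass (M/(N :_M q))`. As colon submodules commute,
`((N :_M q) :_M p) = ((N :_M p) :_M q)`, so `K = (N :_M q)` interchanges the two steps.
-/

section Colon

theorem mem_colonSubmodule {N : Submodule R M} {I : Ideal R} {x : M} :
    x ∈ colonSubmodule N I ↔ ∀ a ∈ I, a • x ∈ N :=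
  Iff.rfl

theorem le_colonSubmodule (N : Submodule R M) (I : Ideal R) : N ≤ colonSubmodule N I :=
  fun _ hx a _ => N.smul_mem a hx

theorem le_colonSubmodule_iff {N K : Submodule R M} {I : Ideal R} :
    K ≤ colonSubmodule N I ↔ I ≤ N.colon K :=
  ⟨fun h _ ha => Submodule.mem_colon.2 fun _ hx => h hx _ ha,
    fun h _ hx _ ha => Submodule.mem_colon.1 (h ha) _ hx⟩

theorem colonSubmodule_comm (N : Submodule R M) (I J : Ideal R) :
    colonSubmodule (colonSubmodule N I) J = colonSubmodule (colonSubmodule N J) I := by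
  ext x
  simp only [mem_colonSubmodule]
  constructor <;> exact fun h a ha b hb => smul_comm a b x ▸ h b hb a ha

end Colon

section AssociatedPrimes

theorem assOf_top (N : Submodule R M) : assOf R N ⊤ = associatedPrimes R (M ⧸ N) :=
  LinearEquiv.AssociatedPrimes.eq
    ((LinearEquiv.ofEq _ _ (by rw [Submodule.map_top, Submodule.range_mkQ])).trans
      Submodule.topEquiv)

theorem mem_colon_mkQ_singleton_iff {N : Submodule R M} {x : M} {r : R} :
    r ∈ (⊥ : Submodule R (M ⧸ N)).colon {N.mkQ x} ↔ r • x ∈ N := by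
  rw [Submodule.mem_colon_singleton, Submodule.mem_bot, ← map_smul, Submodule.mkQ_apply,
    Submodule.Quotient.mk_eq_zero]

theorem notMem_of_forall_mem_iff_smul_mem {N : Submodule R M} {q : Ideal R} (hq : q ≠ ⊤)
    {x : M} (hx : ∀ r : R, r ∈ q ↔ r • x ∈ N) : x ∉ N :=
  fun h => hq <| (Ideal.eq_top_iff_one q).2 <| (hx 1).2 <| by rwa [one_smul]

variable [IsNoetherianRing R]

theorem mem_associatedPrimes_quotient_iff {N : Submodule R M} {q : Ideal R} :
    q ∈ associatedPrimes R (M ⧸ N) ↔ q.IsPrime ∧ ∃ x : M, ∀ r : R, r ∈ q ↔ r • x ∈ N := by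
  rw [AssociatedPrimes.mem_iff, isAssociatedPrime_iff, N.mkQ_surjective.exists]
  simp only [SetLike.ext_iff, mem_colon_mkQ_singleton_iff]

theorem exists_mem_associatedPrimes_quotient_le {N : Submodule R M} {x : M} (hx : x ∉ N) :
    ∃ P ∈ associatedPrimes R (M ⧸ N), ∀ r : R, r • x ∈ N → r ∈ P := by
  obtain ⟨P, hP, hle⟩ := exists_le_isAssociatedPrime_of_isNoetherianRing R (N.mkQ x)
    (by rwa [Ne, Submodule.mkQ_apply, Submodule.Quotient.mk_eq_zero])
  exact ⟨P, hP, fun r hr => hle (mem_colon_mkQ_singleton_iff.2 hr)⟩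

theorem smul_mem_iff_of_mem_colonSubmodule {N : Submodule R M} {p : Ideal R}
    (hp : Maximal (· ∈ associatedPrimes R (M ⧸ N)) p) {x : M}
    (hxN : x ∉ N) (hx : x ∈ colonSubmodule N p) (r : R) : r • x ∈ N ↔ r ∈ p := by
  obtain ⟨P, hP, hle⟩ := exists_mem_associatedPrimes_quotient_le hxN
  have hpP : p ≤ P := fun a ha => hle a (hx a ha)
  exact ⟨fun h => hp.2 hP hpP (hle r h), fun h => hx r h⟩

theorem isRegularPrimeExtIn_top_colonSubmodule {N : Submodule R M} {p : Ideal R}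
    (hp : Maximal (· ∈ associatedPrimes R (M ⧸ N)) p) :
    IsRegularPrimeExtIn ⊤ p N (colonSubmodule N p) := by
  obtain ⟨hprime, x, hx⟩ := mem_associatedPrimes_quotient_iff.1 hp.1
  have hxN : x ∉ N := notMem_of_forall_mem_iff_smul_mem hprime.ne_top hx
  have hxC : x ∈ colonSubmodule N p := fun a ha => (hx a).1 ha
  have hcolon : N.colon (colonSubmodule N p) = p :=
    le_antisymm (fun r hr => (hx r).2 (Submodule.mem_colon.1 hr x hxC))
      (le_colonSubmodule_iff.1 le_rfl)
  have hext : IsPrimeExt p N (colonSubmodule N p) := by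
    refine ⟨(le_colonSubmodule N p).lt_of_ne fun h => hxN (h ▸ hxC), hcolon,
      fun a y hy hay => ?_⟩
    by_cases hyN : y ∈ N
    · exact .inl hyN
    · exact .inr ((smul_mem_iff_of_mem_colonSubmodule hp hyN hy a).1 hay)
  refine ⟨⟨le_top, hext, fun L _ hL => ?_⟩, by rwa [assOf_top]⟩
  exact not_lt_of_ge (le_colonSubmodule_iff.2 hL.2.1.ge)

theorem isRegularPrimeExtIn_top_iff {N K : Submodule R M} {p : Ideal R} :
    IsRegularPrimeExtIn ⊤ p N K ↔
      Maximal (· ∈ associatedPrimes R (M ⧸ N)) p ∧ K = colonSubmodule N p := by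
  refine ⟨fun h => ?_, fun ⟨hp, hK⟩ => hK ▸ isRegularPrimeExtIn_top_colonSubmodule hp⟩
  have hp : Maximal (· ∈ associatedPrimes R (M ⧸ N)) p := by simpa only [assOf_top] using h.2
  refine ⟨hp, (le_colonSubmodule_iff.2 h.1.2.1.2.1.ge).eq_of_not_lt fun hlt => ?_⟩
  exact h.1.2.2 _ le_top (isRegularPrimeExtIn_top_colonSubmodule hp).1.2.1 hlt

theorem mem_associatedPrimes_of_colonSubmodule {N : Submodule R M} {p q : Ideal R}
    (hp : Maximal (· ∈ associatedPrimes R (M ⧸ N)) p)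
    (hq : q ∈ associatedPrimes R (M ⧸ colonSubmodule N p)) (hqp : ¬ q ≤ p) :
    q ∈ associatedPrimes R (M ⧸ N) := by
  obtain ⟨hqprime, x, hx⟩ := mem_associatedPrimes_quotient_iff.1 hq
  obtain ⟨a, haq, hap⟩ := SetLike.not_le_iff_exists.1 hqp
  have hpq : ¬ p ≤ q := by
    refine fun hpq => notMem_of_forall_mem_iff_smul_mem hqprime.ne_top hx fun c hc => ?_
    by_contra hcx
    -- `c • x` would have annihilator `p` modulo `N`, yet `a • c • x ∈ N` with `a ∉ p`
    have hacx : a • c • x ∈ N := smul_comm a c x ▸ (hx a).1 haq c hc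
    exact hap ((smul_mem_iff_of_mem_colonSubmodule hp hcx ((hx c).1 (hpq hc)) a).1 hacx)
  obtain ⟨c, hcp, hcq⟩ := SetLike.not_le_iff_exists.1 hpq
  refine mem_associatedPrimes_quotient_iff.2
    ⟨hqprime, c • x, fun r => ⟨fun hr => ?_, fun hr => ?_⟩⟩
  · exact smul_comm c r x ▸ (hx r).1 hr c hcp
  · have hrc : r * c ∈ q := (hx _).2 (by rw [mul_smul]; exact le_colonSubmodule N p hr)
    exact (hqprime.mem_or_mem hrc).resolve_right hcq

theorem maximal_associatedPrimes_of_colonSubmodule {N : Submodule R M} {p q : Ideal R}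
    (hp : Maximal (· ∈ associatedPrimes R (M ⧸ N)) p)
    (hq : Maximal (· ∈ associatedPrimes R (M ⧸ colonSubmodule N p)) q) (hqp : ¬ q ≤ p) :
    Maximal (· ∈ associatedPrimes R (M ⧸ N)) q := by
  refine ⟨mem_associatedPrimes_of_colonSubmodule hp hq.1 hqp, fun q' hq' hle => ?_⟩
  obtain ⟨hq'prime, z, hz⟩ := mem_associatedPrimes_quotient_iff.1 hq'
  by_cases hzC : z ∈ colonSubmodule N p
  · have hzN := notMem_of_forall_mem_iff_smul_mem hq'prime.ne_top hz
    refine absurd (fun r hr => ?_) hqp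
    exact (smul_mem_iff_of_mem_colonSubmodule hp hzN hzC r).1 ((hz r).1 (hle hr))
  · obtain ⟨P, hP, hPle⟩ := exists_mem_associatedPrimes_quotient_le hzC
    have hq'P : q' ≤ P := fun r hr => hPle r (le_colonSubmodule N p ((hz r).1 hr))
    exact hq'P.trans (hq.2 hP (hle.trans hq'P))

theorem maximal_associatedPrimes_colonSubmodule_swap {N : Submodule R M} {p q : Ideal R}
    (hp : Maximal (· ∈ associatedPrimes R (M ⧸ N)) p)
    (hq : Maximal (· ∈ associatedPrimes R (M ⧸ colonSubmodule N p)) q) (hqp : ¬ q ≤ p) :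
    Maximal (· ∈ associatedPrimes R (M ⧸ colonSubmodule N q)) p := by
  have hqN := maximal_associatedPrimes_of_colonSubmodule hp hq hqp
  have hpq : ¬ p ≤ q := fun h => hqp (hp.2 hqN.1 h)
  obtain ⟨a, haq, hap⟩ := SetLike.not_le_iff_exists.1 hqp
  obtain ⟨hpprime, u, hu⟩ := mem_associatedPrimes_quotient_iff.1 hp.1
  refine ⟨mem_associatedPrimes_quotient_iff.2
      ⟨hpprime, u, fun r => ⟨fun hr => ?_, fun hr => ?_⟩⟩,
    fun p' hp' hle => hp.2 (mem_associatedPrimes_of_colonSubmodule hqN hp' ?_) hle⟩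
  · exact le_colonSubmodule N q ((hu r).1 hr)
  · have har : a * r ∈ p := (hu _).2 (by rw [mul_smul]; exact hr a haq)
    exact (hpprime.mem_or_mem har).resolve_left hap
  · exact fun h => hpq (hle.trans h)

theorem isRegularPrimeExtIn_top_interchange {N K L : Submodule R M} {p q : Ideal R}
    (hK : IsRegularPrimeExtIn ⊤ p N K) (hL : IsRegularPrimeExtIn ⊤ q K L) (hqp : ¬ q ≤ p) :
    IsRegularPrimeExtIn ⊤ q N (colonSubmodule N q) ∧
      IsRegularPrimeExtIn ⊤ p (colonSubmodule N q) L := by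
  obtain ⟨hp, rfl⟩ := isRegularPrimeExtIn_top_iff.1 hK
  obtain ⟨hq, rfl⟩ := isRegularPrimeExtIn_top_iff.1 hL
  refine ⟨isRegularPrimeExtIn_top_colonSubmodule
    (maximal_associatedPrimes_of_colonSubmodule hp hq hqp), ?_⟩
  rw [colonSubmodule_comm]
  exact isRegularPrimeExtIn_top_colonSubmodule
    (maximal_associatedPrimes_colonSubmodule_swap hp hq hqp)

end AssociatedPrimes

theorem IsRPEFiltrationIn.update_succ_interchange {T : Submodule R M} {n : ℕ}
    {F : Fin (n + 1) → Submodule R M} {p : Fin n → Ideal R} (hF : IsRPEFiltrationIn T F p)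
    (i : Fin n) (hi : (i : ℕ) + 1 < n) {K : Submodule R M}
    (hK : IsRegularPrimeExtIn T (p ⟨i + 1, hi⟩) (F i.castSucc) K)
    (hK' : IsRegularPrimeExtIn T (p i) K (F (Fin.succ ⟨i + 1, hi⟩))) :
    IsRPEFiltrationIn T (Function.update F i.succ K)
      (fun j => if j = i then p ⟨i + 1, hi⟩ else if j = ⟨i + 1, hi⟩ then p i else p j) := by
  intro j
  simp only [Function.update_apply, Fin.ext_iff, Fin.val_succ, Fin.val_castSucc]
  split_ifs <;> try omega
  · obtain rfl : j = i := Fin.ext ‹(j : ℕ) = i›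
    exact hK
  · obtain rfl : j = ⟨i + 1, hi⟩ := Fin.ext ‹(j : ℕ) = i + 1›
    exact hK'
  · exact hF j

theorem rpe_filtration_interchange_general {R : Type*} [CommRing R] [IsNoetherianRing R]
    {M : Type*} [AddCommGroup M] [Module R M] {n : ℕ}
    (F : Fin (n + 1) → Submodule R M) (p : Fin n → Ideal R) (hF : IsRPEFiltrationIn ⊤ F p)
    (i : Fin n) (hi : (i : ℕ) + 1 < n)
    (hsub : ¬ p ⟨(i : ℕ) + 1, hi⟩ ≤ p i) :
    ∃ K : Submodule R M,
      IsRPEFiltrationIn ⊤ (Function.update F i.succ K)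
        (fun j => if j = i then p ⟨(i : ℕ) + 1, hi⟩
          else if j = ⟨(i : ℕ) + 1, hi⟩ then p i else p j) := by
  obtain ⟨hK, hK'⟩ := isRegularPrimeExtIn_top_interchange (hF i) (hF ⟨i + 1, hi⟩) hsub
  exact ⟨_, hF.update_succ_interchange i hi hK hK'⟩

/-- Interchange lemma: if in an RPE filtration `p (i+1) ⊄ p i`, then the two consecutive
regular prime extensions can be interchanged, replacing the middle term `F (i+1)` by a
suitable submodule `K`. -/
theorem rpe_filtration_interchange {R : Type*} [CommRing R] [IsNoetherianRing R]
    {M : Type*} [AddCommGroup M] [Module R M] [Module.Finite R M]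
    {n : ℕ} (N : Submodule R M) (hN : N ≠ ⊤)
    (F : Fin (n + 1) → Submodule R M) (p : Fin n → Ideal R)
    (h0 : F 0 = N) (hlast : F (Fin.last n) = ⊤) (hF : IsRPEFiltrationIn ⊤ F p)
    (i : Fin n) (hi : (i : ℕ) + 1 < n)
    (hsub : ¬ p ⟨(i : ℕ) + 1, hi⟩ ≤ p i) :
    ∃ K : Submodule R M,
      IsRPEFiltrationIn ⊤ (Function.update F i.succ K)
        (fun j => if j = i then p ⟨(i : ℕ) + 1, hi⟩
          else if j = ⟨(i : ℕ) + 1, hi⟩ then p i else p j) :=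
  rpe_filtration_interchange_general F p hF i hi hsub
end

section
/- Let R = k[x,y,z]/(xy − z, yz − x), p = (x̄, ȳ, z̄) and q = (x̄, z̄), which are prime ideals of R with q ⊂ p and pq = q. Let M = R/q ⊕ R/q and N = p/q ⊕ 0. Then N ⊂^{p} R/q ⊕ 0 ⊂^{q} M is a regular prime extension filtration, so P_M(N) = pq, and pq = q. -/
/-!
Both steps come from the prime extensions `p/q ⊂ R/q` and `0 ⊂ R/q` (for primes `q ≤ p`) by
taking a product with a fixed factor. If `N ⊂ K` is a `P`-prime extension then every nonzero
element of `K/N` has annihilator `P`, so `Ass(K/N) = {P}`; this makes the second step regular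
since there `K = M`, and the first one because `p` is maximal (`R/p ≅ k`). The first step is a
maximal `p`-prime extension because anything strictly larger contains some `(u, v)` with
`v ≠ 0` in the domain `R/q`, and `y ∈ p \ q` does not kill it. Finally `q = (x, z)` with
`x = yz` and `z = xy`, so `q ⊆ pq`.
-/

variable {R : Type*} [CommRing R] {M : Type*} [AddCommGroup M] [Module R M]

theorem Submodule.Quotient.mk_mem_map_mkQ_iff {p p' : Submodule R M} (h : p ≤ p') {x : M} :
    (Submodule.Quotient.mk x : M ⧸ p) ∈ p'.map p.mkQ ↔ x ∈ p' := by
  rw [← Submodule.mkQ_apply, ← Submodule.mem_comap, Submodule.comap_map_mkQ, sup_eq_right.2 h]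

theorem colon_bot_singleton_mkQ {N K : Submodule R M} {x : M} (hx : x ∈ K) :
    (⊥ : Submodule R ↥(K.map N.mkQ)).colon {⟨N.mkQ x, Submodule.mem_map_of_mem hx⟩} =
      N.colon {x} := by
  ext a
  simp only [Submodule.mem_colon_singleton, Submodule.mem_bot, ← Subtype.coe_inj,
    SetLike.val_smul, ZeroMemClass.coe_zero, Submodule.mkQ_apply]
  rw [← Submodule.Quotient.mk_smul, Submodule.Quotient.mk_eq_zero]

theorem assOf_mono (N : Submodule R M) {K T : Submodule R M} (hKT : K ≤ T) :
    assOf R N K ⊆ assOf R N T :=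
  associatedPrimes.subset_of_injective (f := Submodule.inclusion (Submodule.map_mono hKT))
    (Submodule.inclusion_injective _)

theorem isPrimeExt_map_mkQ {P J : Ideal R} [P.IsPrime] (hJP : J ≤ P) :
    IsPrimeExt P (Submodule.map (J : Submodule R R).mkQ (P : Submodule R R)) ⊤ := by
  have hsmul (a b : R) : a • (Submodule.Quotient.mk b : R ⧸ (J : Submodule R R)) =
      Submodule.Quotient.mk (a * b) := rfl
  have hmem (b : R) := Submodule.Quotient.mk_mem_map_mkQ_iff (x := b) hJP
  refine ⟨lt_top_iff_ne_top.2 fun htop => ?_, ?_, ?_⟩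
  · have : (Submodule.Quotient.mk 1 : R ⧸ (J : Submodule R R)) ∈
        Submodule.map (J : Submodule R R).mkQ (P : Submodule R R) := htop ▸ Submodule.mem_top
    exact Ideal.IsPrime.ne_top ‹_› ((Ideal.eq_top_iff_one P).2 ((hmem 1).1 this))
  · ext a
    refine ⟨fun ha => ?_, fun ha => Submodule.mem_colon.2 fun y _ => ?_⟩
    · have := Submodule.mem_colon.1 ha (Submodule.Quotient.mk 1) trivial
      rwa [hsmul, mul_one, hmem] at this
    · obtain ⟨b, rfl⟩ := Submodule.Quotient.mk_surjective _ y
      exact (hmem _).2 (P.mul_mem_right b ha)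
  · rintro a y - hay
    obtain ⟨b, rfl⟩ := Submodule.Quotient.mk_surjective _ y
    rw [hsmul, hmem] at hay
    rw [hmem]
    exact (Ideal.IsPrime.mem_or_mem ‹_› hay).symm

theorem colon_top_prod_bot_le {M₁ : Type*} [AddCommGroup M₁] [Module R M₁]
    {q : Ideal R} [q.IsPrime] {L : Submodule R (M₁ × R ⧸ q)}
    (hL : ¬ L ≤ (⊤ : Submodule R M₁).prod ⊥) :
    ((⊤ : Submodule R M₁).prod ⊥).colon (L : Set (M₁ × R ⧸ q)) ≤ q := by
  obtain ⟨⟨u, v⟩, huv, hnot⟩ := Set.not_subset.1 hL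
  have hv : v ≠ 0 := fun hv => hnot ⟨trivial, hv⟩
  intro a ha
  have hav : a • v = 0 := (Submodule.mem_colon.1 ha _ huv).2
  rw [Algebra.smul_def, mul_eq_zero, Ideal.Quotient.algebraMap_eq,
    Ideal.Quotient.eq_zero_iff_mem] at hav
  exact hav.resolve_right hv

theorem hasGPIF_pair {N K T : Submodule R M} {P Q : Ideal R} (hN : IsRegularPrimeExtIn T P N K)
    (hK : IsRegularPrimeExtIn T Q K T) : HasGPIF N T {P, Q} :=
  ⟨2, ![N, K, T], ![P, Q], rfl, rfl, Fin.forall_fin_two.2 ⟨hN, hK⟩, rfl⟩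

namespace IsPrimeExt

variable {P : Ideal R} {N K : Submodule R M}

theorem colon_singleton_eq (h : IsPrimeExt P N K) {x : M} (hxK : x ∈ K) (hxN : x ∉ N) :
    N.colon {x} = P := by
  ext a
  rw [Submodule.mem_colon_singleton]
  refine ⟨fun hax => (h.2.2 a x hxK hax).resolve_left hxN, fun ha => ?_⟩
  rw [← h.2.1] at ha
  exact Submodule.mem_colon.1 ha x hxK

theorem isPrime (h : IsPrimeExt P N K) : P.IsPrime := by
  obtain ⟨x, hxK, hxN⟩ := SetLike.exists_of_lt h.1
  rw [← h.colon_singleton_eq hxK hxN]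
  refine ⟨fun htop => hxN ?_, fun {a b} hab => ?_⟩
  · simpa using Submodule.mem_colon_singleton.1 (htop ▸ Submodule.mem_top : (1 : R) ∈ _)
  · rw [Submodule.mem_colon_singleton, mul_smul] at hab
    rcases h.2.2 a _ (K.smul_mem b hxK) hab with hb | ha
    · exact Or.inr (Submodule.mem_colon_singleton.2 hb)
    · exact Or.inl (h.colon_singleton_eq hxK hxN ▸ ha)

theorem assOf_eq_singleton (h : IsPrimeExt P N K) : assOf R N K = {P} := by
  have hP := h.isPrime
  ext I
  refine ⟨fun ⟨hI, y, hIy⟩ => ?_, fun hIP => ?_⟩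
  · obtain ⟨y, x, hxK, rfl⟩ := y
    rw [colon_bot_singleton_mkQ hxK] at hIy
    by_cases hxN : x ∈ N
    · refine absurd ?_ hI.ne_top
      rw [hIy, Ideal.radical_eq_top, Ideal.eq_top_iff_one, Submodule.mem_colon_singleton, one_smul]
      exact hxN
    · rw [hIy, h.colon_singleton_eq hxK hxN, hP.radical]
      rfl
  · obtain ⟨x, hxK, hxN⟩ := SetLike.exists_of_lt h.1
    refine ⟨hIP ▸ hP, ⟨_, Submodule.mem_map_of_mem hxK⟩, ?_⟩
    rw [colon_bot_singleton_mkQ hxK, h.colon_singleton_eq hxK hxN, hP.radical]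
    exact hIP

theorem isRegularPrimeExtIn_self (h : IsPrimeExt P N K) : IsRegularPrimeExtIn K P N K :=
  ⟨⟨le_rfl, h, fun _ hL _ hlt => hlt.not_ge hL⟩, by
    rw [h.assOf_eq_singleton]
    exact ⟨rfl, fun _ hI _ => hI.le⟩⟩

theorem isRegularPrimeExtIn_of_isMaximal [P.IsMaximal] {T : Submodule R M} (h : IsPrimeExt P N K)
    (hKT : K ≤ T) (hmax : ∀ L ≤ T, IsPrimeExt P N L → ¬ K < L) :
    IsRegularPrimeExtIn T P N K :=
  ⟨⟨hKT, h, hmax⟩, assOf_mono N hKT (h.assOf_eq_singleton ▸ rfl),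
    fun _ hI hPI => (Ideal.IsMaximal.eq_of_le ‹_› hI.isPrime.ne_top hPI).ge⟩

variable {M₂ : Type*} [AddCommGroup M₂] [Module R M₂]

theorem prod_right (h : IsPrimeExt P N K) (L : Submodule R M₂) :
    IsPrimeExt P (N.prod L) (K.prod L) := by
  obtain ⟨hlt, hcolon, hprime⟩ := h
  obtain ⟨x, hxK, hxN⟩ := SetLike.exists_of_lt hlt
  refine ⟨lt_of_le_of_ne (Submodule.prod_mono hlt.le le_rfl) fun heq => hxN ?_, ?_, ?_⟩
  · have : (x, (0 : M₂)) ∈ N.prod L := heq ▸ ⟨hxK, L.zero_mem⟩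
    exact this.1
  · rw [← hcolon]
    ext a
    simp only [Submodule.mem_colon, SetLike.mem_coe, Submodule.mem_prod, Prod.forall,
      Prod.smul_fst, Prod.smul_snd]
    exact ⟨fun H y hy => (H y 0 ⟨hy, L.zero_mem⟩).1,
      fun H y z hyz => ⟨H y hyz.1, L.smul_mem a hyz.2⟩⟩
  · rintro a ⟨y, z⟩ ⟨hy, hz⟩ ⟨hay, -⟩
    exact (hprime a y hy hay).imp_left fun hyN => ⟨hyN, hz⟩

theorem prod_left (L : Submodule R M₂) (h : IsPrimeExt P N K) :
    IsPrimeExt P (L.prod N) (L.prod K) := by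
  obtain ⟨hlt, hcolon, hprime⟩ := h
  obtain ⟨x, hxK, hxN⟩ := SetLike.exists_of_lt hlt
  refine ⟨lt_of_le_of_ne (Submodule.prod_mono le_rfl hlt.le) fun heq => hxN ?_, ?_, ?_⟩
  · have : ((0 : M₂), x) ∈ L.prod N := heq ▸ ⟨L.zero_mem, hxK⟩
    exact this.2
  · rw [← hcolon]
    ext a
    simp only [Submodule.mem_colon, SetLike.mem_coe, Submodule.mem_prod, Prod.forall,
      Prod.smul_fst, Prod.smul_snd]
    exact ⟨fun H y hy => (H 0 y ⟨L.zero_mem, hy⟩).2,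
      fun H z y hzy => ⟨L.smul_mem a hzy.1, H y hzy.2⟩⟩
  · rintro a ⟨z, y⟩ ⟨hz, hy⟩ ⟨-, hay⟩
    exact (hprime a y hy hay).imp_left fun hyN => ⟨hz, hyN⟩

theorem not_top_prod_bot_lt {q : Ideal R} [q.IsPrime] (hPq : ¬ P ≤ q)
    {N L : Submodule R (M₂ × R ⧸ q)} (hN : N ≤ (⊤ : Submodule R M₂).prod ⊥)
    (hL : IsPrimeExt P N L) : ¬ (⊤ : Submodule R M₂).prod ⊥ < L := fun hlt =>
  hPq (hL.2.1 ▸ (Submodule.colon_mono hN subset_rfl).trans (colon_top_prod_bot_le hlt.not_ge))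

end IsPrimeExt

namespace MvPolynomial

variable {σ : Type*}

noncomputable def killVars (s : Set σ) : MvPolynomial σ R →ₐ[R] MvPolynomial σ R :=
  aeval (sᶜ.indicator X)

theorem killVars_X_of_mem {s : Set σ} {i : σ} (hi : i ∈ s) :
    killVars s (X i : MvPolynomial σ R) = 0 := by
  simp [killVars, hi]

theorem killVars_X_of_notMem {s : Set σ} {i : σ} (hi : i ∉ s) :
    killVars s (X i : MvPolynomial σ R) = X i := by
  simp [killVars, hi]

theorem sub_killVars_mem_span_X_image (s : Set σ) (g : MvPolynomial σ R) :
    g - killVars s g ∈ Ideal.span (X '' s) := by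
  induction g using MvPolynomial.induction_on with
  | C a => simp
  | add u v hu hv => simpa [map_add, add_sub_add_comm] using add_mem hu hv
  | mul_X u i hu =>
    have hXi : X i - killVars s (X i : MvPolynomial σ R) ∈ Ideal.span (X '' s) := by
      by_cases hi : i ∈ s
      · simpa [killVars_X_of_mem hi] using Ideal.subset_span (Set.mem_image_of_mem X hi)
      · simp [killVars_X_of_notMem hi]
    convert add_mem (Ideal.mul_mem_left _ u hXi)
      (Ideal.mul_mem_right (killVars s (X i : MvPolynomial σ R)) _ hu) using 1
    rw [map_mul]
    ring

theorem ker_killVars (s : Set σ) :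
    RingHom.ker (killVars (R := R) s) = Ideal.span (X '' s) := by
  refine le_antisymm (fun g hg => ?_) (Ideal.span_le.2 ?_)
  · simpa [(RingHom.mem_ker).1 hg] using sub_killVars_mem_span_X_image s g
  · rintro _ ⟨i, hi, rfl⟩
    exact killVars_X_of_mem hi

theorem isPrime_span_X_image [IsDomain R] (s : Set σ) :
    (Ideal.span (X '' s) : Ideal (MvPolynomial σ R)).IsPrime := by
  rw [← ker_killVars]
  exact RingHom.ker_isPrime _

theorem X_notMem_span_X_image [Nontrivial R] {s : Set σ} {i : σ} (hi : i ∉ s) :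
    (X i : MvPolynomial σ R) ∉ Ideal.span (X '' s) := by
  rw [← ker_killVars, RingHom.mem_ker, killVars_X_of_notMem hi]
  exact X_ne_zero i

theorem ker_constantCoeff :
    RingHom.ker (constantCoeff : MvPolynomial σ R →+* R) = Ideal.span (Set.range X) := by
  ext g
  rw [RingHom.mem_ker, ← Set.image_univ, mem_ideal_span_X_image, constantCoeff_eq]
  simp only [Set.mem_univ, true_and]
  refine ⟨fun hg m hm => ?_, fun h => ?_⟩
  · by_contra! hm0
    exact mem_support_iff.1 hm (by rwa [show m = 0 from Finsupp.ext hm0])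
  · by_contra hg
    obtain ⟨i, hi⟩ := h 0 (mem_support_iff.2 hg)
    exact hi rfl

theorem isMaximal_span_range_X {k : Type*} [Field k] :
    (Ideal.span (Set.range X) : Ideal (MvPolynomial σ k)).IsMaximal := by
  rw [← ker_constantCoeff]
  exact RingHom.ker_isMaximal_of_surjective _ fun a => ⟨C a, constantCoeff_C _ _⟩

end MvPolynomial

namespace Ideal

variable {A B : Type*} [Ring A] [Ring B] {f : A →+* B}

theorem map_isMaximal_of_surjective (hf : Function.Surjective f) {I : Ideal A} [I.IsMaximal]
    (hI : RingHom.ker f ≤ I) : (I.map f).IsMaximal := by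
  refine (map_eq_top_or_isMaximal_of_surjective f hf ‹_›).resolve_left fun htop => ?_
  have := congrArg (comap f) htop
  rw [comap_map_of_surjective' f hf, sup_eq_left.2 hI, comap_top] at this
  exact IsMaximal.ne_top ‹_› this

theorem map_lt_map_of_surjective (hf : Function.Surjective f) {I J : Ideal A}
    (hI : RingHom.ker f ≤ I) (hIJ : I < J) : I.map f < J.map f := by
  refine lt_of_le_of_ne (map_mono hIJ.le) fun heq => hIJ.ne ?_
  have := congrArg (comap f) heq
  rwa [comap_map_of_surjective' f hf, comap_map_of_surjective' f hf, sup_eq_left.2 hI,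
    sup_eq_left.2 (hI.trans hIJ.le)] at this

end Ideal

section Presentation

open MvPolynomial

variable {k : Type*} [Field k]

theorem isPrime_span_X_zero_X_two :
    (Ideal.span {X 0, X 2} : Ideal (MvPolynomial (Fin 3) k)).IsPrime := by
  simpa [Set.image_insert_eq] using isPrime_span_X_image (R := k) ({0, 2} : Set (Fin 3))

theorem isMaximal_span_X_zero_X_one_X_two :
    (Ideal.span {X 0, X 1, X 2} : Ideal (MvPolynomial (Fin 3) k)).IsMaximal := by
  convert isMaximal_span_range_X (σ := Fin 3) (k := k)
  ext
  simp [Fin.exists_fin_succ, eq_comm]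

theorem span_X_zero_X_two_lt :
    (Ideal.span {X 0, X 2} : Ideal (MvPolynomial (Fin 3) k)) < Ideal.span {X 0, X 1, X 2} := by
  refine lt_of_le_of_ne (Ideal.span_mono (by simp [Set.insert_subset_iff])) fun heq => ?_
  have hX1 : (X 1 : MvPolynomial (Fin 3) k) ∉ Ideal.span {X 0, X 2} := by
    simpa [Set.image_insert_eq] using
      X_notMem_span_X_image (R := k) (s := {0, 2}) (i := 1) (by decide)
  exact hX1 (heq ▸ Ideal.subset_span (by simp))

theorem span_relations_le_span_X_zero_X_two :
    (Ideal.span {X 0 * X 1 - X 2, X 1 * X 2 - X 0} : Ideal (MvPolynomial (Fin 3) k)) ≤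
      Ideal.span {X 0, X 2} := by
  have hX0 : (X 0 : MvPolynomial (Fin 3) k) ∈ Ideal.span {X 0, X 2} := Ideal.subset_span (by simp)
  have hX2 : (X 2 : MvPolynomial (Fin 3) k) ∈ Ideal.span {X 0, X 2} := Ideal.subset_span (by simp)
  rw [Ideal.span_le, Set.insert_subset_iff, Set.singleton_subset_iff]
  exact ⟨sub_mem (Ideal.mul_mem_right _ _ hX0) hX2, sub_mem (Ideal.mul_mem_left _ _ hX2) hX0⟩

theorem map_span_X_mul_map_span_X_zero_X_two {A : Type*} [CommRing A]
    {f : MvPolynomial (Fin 3) k →+* A}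
    (hker : RingHom.ker f = Ideal.span {X 0 * X 1 - X 2, X 1 * X 2 - X 0}) :
    (Ideal.span {X 0, X 1, X 2}).map f * (Ideal.span {X 0, X 2}).map f =
      (Ideal.span {X 0, X 2}).map f := by
  have hrel {g h : MvPolynomial (Fin 3) k} (hgh : g - h ∈ RingHom.ker f) : f g = f h := by
    rwa [RingHom.mem_ker, map_sub, sub_eq_zero] at hgh
  have hX0 : f (X 0) = f (X 1) * f (X 2) := by
    rw [← map_mul]
    exact (hrel (hker ▸ Ideal.subset_span (Set.mem_insert_of_mem _ rfl))).symm
  have hX2 : f (X 2) = f (X 1) * f (X 0) := by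
    rw [mul_comm, ← map_mul]
    exact (hrel (hker ▸ Ideal.subset_span (Set.mem_insert _ _))).symm
  have hX1 : f (X 1) ∈ (Ideal.span {X 0, X 1, X 2}).map f :=
    Ideal.mem_map_of_mem f (Ideal.subset_span (Set.mem_insert_of_mem _ (Set.mem_insert _ _)))
  have hq {g : MvPolynomial (Fin 3) k} (hg : g ∈ ({X 0, X 2} : Set _)) :
      f g ∈ (Ideal.span {X 0, X 2}).map f :=
    Ideal.mem_map_of_mem f (Ideal.subset_span hg)
  refine le_antisymm Ideal.mul_le_right ?_
  rw [Ideal.map_le_iff_le_comap, Ideal.span_le, Set.insert_subset_iff,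
    Set.singleton_subset_iff, SetLike.mem_coe, SetLike.mem_coe, Ideal.mem_comap,
    Ideal.mem_comap]
  constructor
  · rw [hX0]
    exact Ideal.mul_mem_mul hX1 (hq (Set.mem_insert_of_mem _ rfl))
  · rw [hX2]
    exact Ideal.mul_mem_mul hX1 (hq (Set.mem_insert _ _))

end Presentation

open MvPolynomial in
theorem gpif_nonminimal_example_general (k : Type*) [Field k]
    (R : Type*) [CommRing R]
    (f : MvPolynomial (Fin 3) k →+* R) (hf : Function.Surjective f)
    (hker : RingHom.ker f = Ideal.span {X 0 * X 1 - X 2, X 1 * X 2 - X 0})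
    (p q : Ideal R) (hp : p = (Ideal.span {X 0, X 1, X 2}).map f)
    (hq : q = (Ideal.span {X 0, X 2}).map f)
    (N : Submodule R ((R ⧸ (q : Submodule R R)) × (R ⧸ (q : Submodule R R))))
    (hN : N = (Submodule.map (q : Submodule R R).mkQ (p : Submodule R R)).prod ⊥) :
    p.IsPrime ∧ q.IsPrime ∧ q < p ∧ p * q = q ∧
      IsRegularPrimeExtIn ⊤ p N ((⊤ : Submodule R (R ⧸ (q : Submodule R R))).prod (⊥ : Submodule R (R ⧸ (q : Submodule R R)))) ∧
      IsRegularPrimeExtIn ⊤ q ((⊤ : Submodule R (R ⧸ (q : Submodule R R))).prod (⊥ : Submodule R (R ⧸ (q : Submodule R R)))) ⊤ ∧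
      HasGPIF N ⊤ {p, q} := by
  have hkerq : RingHom.ker f ≤ Ideal.span {X 0, X 2} := hker ▸ span_relations_le_span_X_zero_X_two
  have hqp₀ := span_X_zero_X_two_lt (k := k)
  have := isPrime_span_X_zero_X_two (k := k)
  have := isMaximal_span_X_zero_X_one_X_two (k := k)
  have hq_prime : q.IsPrime := hq ▸ Ideal.map_isPrime_of_surjective hf hkerq
  have hp_max : p.IsMaximal := hp ▸ Ideal.map_isMaximal_of_surjective hf (hkerq.trans hqp₀.le)
  have hqp : q < p := hp ▸ hq ▸ Ideal.map_lt_map_of_surjective hf hkerq hqp₀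
  set K : Submodule R ((R ⧸ q) × (R ⧸ q)) := (⊤ : Submodule R (R ⧸ q)).prod ⊥
  have hpN : IsPrimeExt p N K := hN ▸ (isPrimeExt_map_mkQ hqp.le).prod_right ⊥
  have hqK : IsPrimeExt q K ⊤ := by
    simpa only [Submodule.mkQ_map_self, Submodule.prod_top] using
      (isPrimeExt_map_mkQ (le_refl q)).prod_left ⊤
  have hstep₁ : IsRegularPrimeExtIn ⊤ p N K :=
    hpN.isRegularPrimeExtIn_of_isMaximal le_top fun _ _ hL =>
      hL.not_top_prod_bot_lt hqp.not_ge (hN ▸ Submodule.prod_mono le_top le_rfl)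
  have hstep₂ := hqK.isRegularPrimeExtIn_self
  refine ⟨hp_max.isPrime, hq_prime, hqp, ?_, hstep₁, hstep₂, hasGPIF_pair hstep₁ hstep₂⟩
  rw [hp, hq]
  exact map_span_X_mul_map_span_X_zero_X_two hker

open MvPolynomial in
/-- In `R = k[x,y,z]/(xy − z, yz − x)` with `p = (x̄,ȳ,z̄)` and `q = (x̄,z̄)`: `p`, `q`
are prime, `q ⊂ p`, `pq = q`, and for `M = R/q ⊕ R/q`, `N = p/q ⊕ 0` the chain
`N ⊂^p R/q ⊕ 0 ⊂^q M` is an RPE filtration, so `P_M(N) = pq` while `pq = q`. -/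
theorem gpif_nonminimal_example (k : Type*) [Field k]
    (R : Type*) [CommRing R] [IsNoetherianRing R]
    (f : MvPolynomial (Fin 3) k →+* R) (hf : Function.Surjective f)
    (hker : RingHom.ker f = Ideal.span {X 0 * X 1 - X 2, X 1 * X 2 - X 0})
    (p q : Ideal R) (hp : p = (Ideal.span {X 0, X 1, X 2}).map f)
    (hq : q = (Ideal.span {X 0, X 2}).map f)
    (N : Submodule R ((R ⧸ (q : Submodule R R)) × (R ⧸ (q : Submodule R R))))
    (hN : N = (Submodule.map (q : Submodule R R).mkQ (p : Submodule R R)).prod ⊥) :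
    p.IsPrime ∧ q.IsPrime ∧ q < p ∧ p * q = q ∧
      IsRegularPrimeExtIn ⊤ p N ((⊤ : Submodule R (R ⧸ (q : Submodule R R))).prod (⊥ : Submodule R (R ⧸ (q : Submodule R R)))) ∧
      IsRegularPrimeExtIn ⊤ q ((⊤ : Submodule R (R ⧸ (q : Submodule R R))).prod (⊥ : Submodule R (R ⧸ (q : Submodule R R)))) ⊤ ∧
      HasGPIF N ⊤ {p, q} :=
  gpif_nonminimal_example_general k R f hf hker p q hp hq N hN
end
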